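/- Let E be a Banach lattice, let μ be a locally finite Borel measure on ℝ^d with μ(ℝ^d) = ∞, and let r ∈ (1,∞). Assume there is a constant C such that for each finite collection D of dyadic cubes and each locally integrable function f: ℝ^d → E there exists a sparse subcollection S ⊆ D with ‖M̃^μ_D f(x)‖_E ≤ C · A^μ_{r,S}(‖f‖_E)(x) for μ-almost every x. Then E satisfies an upper r-estimate: there is a constant C' such that for all pairwise disjoint vectors e_1, …, e_n ∈ E (i.e. inf{|e_j|,|e_k|} = 0 for j ≠ k) one has ‖∑_{k=1}^n e_k‖_E ≤ C' (∑_{k=1}^n ‖e_k‖_E^r)^{1/r}. -/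

import Mathlib

open MeasureTheory ENNReal Set

attribute [local instance] Classical.propDecidable

/-- A dyadic cube in `ℝ^d`, given by a generation `k : ℤ` and a position `m : Fin d → ℤ`;
its underlying set is `∏_i [2^k m i, 2^k (m i + 1))`. -/
structure DyadicCube (d : ℕ) where
  k : ℤ
  m : Fin d → ℤ
deriving DecidableEq

/-- The underlying set of a dyadic cube. -/
def DyadicCube.set {d : ℕ} (Q : DyadicCube d) : Set (Fin d → ℝ) :=
  {x | ∀ i, (2 : ℝ) ^ Q.k * Q.m i ≤ x i ∧ x i < (2 : ℝ) ^ Q.k * (Q.m i + 1)}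

/-- A (non-dyadic) axis-parallel cube in `ℝ^d`, given by its corner and side length. -/
structure Cube (d : ℕ) where
  c : Fin d → ℝ
  len : ℝ
  len_pos : 0 < len

/-- The underlying set of an axis-parallel cube. -/
def Cube.set {d : ℕ} (Q : Cube d) : Set (Fin d → ℝ) :=
  {x | ∀ i, Q.c i ≤ x i ∧ x i < Q.c i + Q.len}

/-- The average `⟨f⟩^μ_A = (1/μ(A)) ∫_A f dμ` of a vector-valued function. -/
noncomputable def avg {d : ℕ} {E : Type*} [NormedAddCommGroup E] [NormedSpace ℝ E]
    (μ : Measure (Fin d → ℝ)) (A : Set (Fin d → ℝ)) (f : (Fin d → ℝ) → E) : E :=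
  (μ A).toReal⁻¹ • ∫ x in A, f x ∂μ

/-- The dyadic lattice Hardy–Littlewood maximal operator
`M̃^μ_D f (x) = sup_{Q ∈ D} ⟨|f|⟩^μ_Q 1_Q(x)` (a lattice supremum of finitely many
positive elements, realized as a fold of `⊔` with base point `0`). -/
noncomputable def dyadicMaximal {d : ℕ} {E : Type*} [NormedAddCommGroup E] [Lattice E] [HasSolidNorm E] [IsOrderedAddMonoid E]
    [NormedSpace ℝ E] (μ : Measure (Fin d → ℝ)) (D : Finset (DyadicCube d))
    (f : (Fin d → ℝ) → E) (x : Fin d → ℝ) : E :=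
  D.fold (· ⊔ ·) 0 fun Q => Set.indicator Q.set (fun _ => avg μ Q.set fun y => |f y|) x

/-- A collection of dyadic cubes is sparse (w.r.t. `μ`): each `Q` in the collection carries a
measurable subset `E_Q ⊆ Q` with `μ(Q) ≤ 2 μ(E_Q)`, the subsets being pairwise disjoint. -/
def IsSparse {d : ℕ} (μ : Measure (Fin d → ℝ)) (S : Finset (DyadicCube d)) : Prop :=
  ∃ ES : DyadicCube d → Set (Fin d → ℝ),
    (∀ Q ∈ S, ES Q ⊆ Q.set ∧ MeasurableSet (ES Q) ∧ μ Q.set ≤ 2 * μ (ES Q)) ∧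
    (S : Set (DyadicCube d)).Pairwise fun Q Q' => Disjoint (ES Q) (ES Q')

/-- The sparse operator `A^μ_{q,S} f (x) = (∑_{Q ∈ S} ⟨|f|⟩_Q^q 1_Q(x))^{1/q}` acting on
scalar-valued functions. -/
noncomputable def sparseOp {d : ℕ} (μ : Measure (Fin d → ℝ)) (q : ℝ)
    (S : Finset (DyadicCube d)) (f : (Fin d → ℝ) → ℝ) (x : Fin d → ℝ) : ℝ :=
  (∑ Q ∈ S, Set.indicator Q.set (fun _ => avg μ Q.set (fun y => |f y|) ^ q) x) ^ (1 / q)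

/-- `q`-convexity of a Banach lattice with constant `C`:
`‖(∑ |e k|^q)^{1/q}‖ ≤ C (∑ ‖e k‖^q)^{1/q}`. The Krivine element `(∑ |e k|^q)^{1/q}` is
characterized as the least upper bound of all combinations `∑ a k • |e k|` where the
nonnegative coefficients `a` lie in the unit ball of the norm dual to the `ℓ^q`-norm. -/
def IsQConvexWith (E : Type*) [NormedAddCommGroup E] [Lattice E] [HasSolidNorm E] [IsOrderedAddMonoid E] [NormedSpace ℝ E]
    (q C : ℝ) : Prop :=
  ∀ (n : ℕ) (e : Fin n → E) (s : E),
    IsLUB {x : E | ∃ a : Fin n → ℝ, (∀ k, 0 ≤ a k) ∧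
        (∀ t : Fin n → ℝ, (∀ k, 0 ≤ t k) → ∑ k, a k * t k ≤ (∑ k, t k ^ q) ^ (1 / q)) ∧
        x = ∑ k, a k • |e k|} s →
    ‖s‖ ≤ C * (∑ k, ‖e k‖ ^ q) ^ (1 / q)

/-- The Hardy–Littlewood property of a Banach lattice `E`: for some `p ∈ (1,∞)` the dyadic
lattice maximal operators (w.r.t. Lebesgue measure) are bounded on `L^p(dx; E)` uniformly in
the finite collection of dyadic cubes. -/
def HasHLProperty (d : ℕ) (E : Type*) [NormedAddCommGroup E] [Lattice E] [HasSolidNorm E] [IsOrderedAddMonoid E] [NormedSpace ℝ E] : Prop :=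
  ∃ p : ℝ, 1 < p ∧ ∃ C : ℝ, ∀ (D : Finset (DyadicCube d)) (f : (Fin d → ℝ) → E),
    MemLp f (ENNReal.ofReal p) volume →
    eLpNorm (dyadicMaximal volume D f) (ENNReal.ofReal p) volume ≤
      ENNReal.ofReal C * eLpNorm f (ENNReal.ofReal p) volume

/-- Order continuity of a Banach lattice: every downward directed set with infimum `0`
contains elements of arbitrarily small norm cofinally (i.e. the corresponding decreasing net
converges to `0` in norm). -/
def IsOrderContinuous (E : Type*) [NormedAddCommGroup E] [Lattice E] [HasSolidNorm E] [IsOrderedAddMonoid E] : Prop :=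
  ∀ A : Set E, A.Nonempty → DirectedOn (· ≥ ·) A → IsGLB A 0 →
    ∀ ε : ℝ, 0 < ε → ∃ a ∈ A, ∀ b ∈ A, b ≤ a → ‖b‖ < ε

/-!
Take nested dyadic cubes `Q₀ ⊆ Q₁ ⊆ …` with `μ(Q_{m+1}) ≥ 2 μ(Q_m)` (possible since
`μ(ℝ^d) = ∞`) and test the sparse bound on `f = ∑_j 1_{Q_{j+1} \ Q_j} e_j` with
`D = {Q₁, …, Q_n}`. On `Q₀` every average `⟨|f|⟩_{Q_{j+1}}` dominates `|e_j| / 2`, so by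
disjointness `|∑ e_j| ≤ ∑ |e_j| = sup |e_j| ≤ 2 M̃f`. On the other hand
`⟨‖f‖⟩_{Q_{j+1}} ≤ ∑_{i ≤ j} 2^{i-j} ‖e_i‖`, and Schur's test for this geometric kernel bounds
every sparse operator `A_{r,S}(‖f‖)` with `S ⊆ D` by `2 (∑ ‖e_j‖^r)^{1/r}`.
-/

open Filter Topology Finset

section LatticeOrderedGroup

variable {α ι : Type*} [AddCommGroup α] [Lattice α] [IsOrderedAddMonoid α]

lemma nonneg_of_two_pow_nsmul_nonneg {a : α} (m : ℕ) (h : 0 ≤ 2 ^ m • a) : 0 ≤ a := by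
  induction m with
  | zero => simpa using h
  | succ m ih => exact ih (nsmul_two_semiclosed (by rwa [smul_smul, ← pow_succ']))

lemma add_inf_le_inf_add_inf {a b c : α} (ha : 0 ≤ a) (hb : 0 ≤ b) (hc : 0 ≤ c) :
    (a + b) ⊓ c ≤ a ⊓ c + b ⊓ c := by
  rw [inf_add a c (b ⊓ c), add_inf b c a, add_inf b c c]
  exact le_inf (le_inf inf_le_left (inf_le_right.trans (le_add_of_nonneg_left ha)))
    (le_inf (inf_le_right.trans (le_add_of_nonneg_right hb))
      (inf_le_right.trans (le_add_of_nonneg_right hc)))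

lemma Finset.sum_inf_eq_zero {s : Finset ι} {e : ι → α} {c : α} (he : ∀ i ∈ s, 0 ≤ e i)
    (hc : 0 ≤ c) (hec : ∀ i ∈ s, e i ⊓ c = 0) : (∑ i ∈ s, e i) ⊓ c = 0 := by
  induction s using Finset.cons_induction with
  | empty => simpa using hc
  | cons a s ha ih =>
    simp only [mem_cons, forall_eq_or_imp] at he hec
    rw [sum_cons]
    refine le_antisymm ?_ (le_inf (add_nonneg he.1 (sum_nonneg he.2)) hc)
    calc (e a + ∑ i ∈ s, e i) ⊓ c ≤ e a ⊓ c + (∑ i ∈ s, e i) ⊓ c :=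
          add_inf_le_inf_add_inf he.1 (sum_nonneg he.2) hc
      _ = 0 := by rw [hec.1, ih he.2 hec.2, add_zero]

lemma Finset.sum_le_of_pairwise_inf_eq_zero {s : Finset ι} {e : ι → α} {z : α}
    (he : ∀ i ∈ s, 0 ≤ e i) (hdisj : (s : Set ι).Pairwise fun i j => e i ⊓ e j = 0)
    (hz : 0 ≤ z) (hez : ∀ i ∈ s, e i ≤ z) : ∑ i ∈ s, e i ≤ z := by
  induction s using Finset.cons_induction with
  | empty => simpa using hz
  | cons a s ha ih =>
    rw [coe_cons, Set.pairwise_insert] at hdisj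
    simp only [mem_cons, forall_eq_or_imp] at he hez
    have hinf : e a ⊓ ∑ i ∈ s, e i = 0 := by
      rw [inf_comm]
      exact sum_inf_eq_zero he.2 he.1 fun i hi => (hdisj.2 i hi (ne_of_mem_of_not_mem hi ha).symm).2
    rw [sum_cons, ← inf_add_sup, hinf, zero_add]
    exact sup_le hez.1 (ih he.2 hdisj.1 hez.2)

end LatticeOrderedGroup

section NormedLattice

variable {E : Type*} [NormedAddCommGroup E] [Lattice E] [HasSolidNorm E] [IsOrderedAddMonoid E]
  [NormedSpace ℝ E]

/- Nothing in these classes ties the order to real scalars; positivity of `c • x` comes from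
dyadic `c` (lattice groups are unperforated at `2`) and closedness of the positive cone. -/
lemma smul_nonneg_of_hasSolidNorm {c : ℝ} {x : E} (hc : 0 ≤ c) (hx : 0 ≤ x) : 0 ≤ c • x := by
  have hdyadic : ∀ m k : ℕ, 0 ≤ ((k : ℝ) / 2 ^ m) • x := fun m k =>
    nonneg_of_two_pow_nsmul_nonneg m <| by
      rw [← Nat.cast_smul_eq_nsmul ℝ, smul_smul, Nat.cast_pow, Nat.cast_ofNat,
        mul_div_cancel₀ _ (by positivity), Nat.cast_smul_eq_nsmul]
      exact nsmul_nonneg hx k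
  have hlim : Tendsto (fun m : ℕ => ((⌊c * 2 ^ m⌋₊ : ℝ) / 2 ^ m) • x) atTop (𝓝 (c • x)) :=
    ((tendsto_nat_floor_mul_div_atTop hc).comp
      (tendsto_pow_atTop_atTop_of_one_lt one_lt_two)).smul_const x
  exact isClosed_nonneg.mem_of_tendsto hlim (Eventually.of_forall fun m => hdyadic m _)

instance HasSolidNorm.toPosSMulMono : PosSMulMono ℝ E :=
  .of_smul_nonneg fun _ hc _ hx => smul_nonneg_of_hasSolidNorm hc hx

end NormedLattice

section Operators

variable {d : ℕ} {μ : Measure (Fin d → ℝ)}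

lemma dyadicMaximal_le_iff {E : Type*} [NormedAddCommGroup E] [Lattice E] [HasSolidNorm E]
    [IsOrderedAddMonoid E] [NormedSpace ℝ E] {D : Finset (DyadicCube d)}
    {f : (Fin d → ℝ) → E} {x : Fin d → ℝ} {c : E} :
    dyadicMaximal μ D f x ≤ c ↔
      0 ≤ c ∧ ∀ Q ∈ D, Q.set.indicator (fun _ => avg μ Q.set fun y => |f y|) x ≤ c :=
  fold_op_rel_iff_and (r := fun a b => b ≤ a) sup_le_iff

lemma avg_abs_nonneg (A : Set (Fin d → ℝ)) (g : (Fin d → ℝ) → ℝ) :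
    0 ≤ avg μ A fun y => |g y| :=
  smul_nonneg (inv_nonneg.2 toReal_nonneg) (integral_nonneg fun _ => abs_nonneg _)

lemma sparseOp_nonneg (r : ℝ) (S : Finset (DyadicCube d)) (g : (Fin d → ℝ) → ℝ)
    (x : Fin d → ℝ) : 0 ≤ sparseOp μ r S g x :=
  Real.rpow_nonneg (sum_nonneg fun _ _ =>
    Set.indicator_nonneg (fun _ _ => Real.rpow_nonneg (avg_abs_nonneg _ _) r) x) _

lemma sparseOp_le_of_subset {r : ℝ} (hr : 0 ≤ r) {S D : Finset (DyadicCube d)} (hSD : S ⊆ D)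
    (g : (Fin d → ℝ) → ℝ) (x : Fin d → ℝ) :
    sparseOp μ r S g x ≤ (∑ Q ∈ D, (avg μ Q.set fun y => |g y|) ^ r) ^ (1 / r) := by
  have hterm : ∀ Q : DyadicCube d, 0 ≤ (avg μ Q.set fun y => |g y|) ^ r := fun Q =>
    Real.rpow_nonneg (avg_abs_nonneg _ _) r
  refine Real.rpow_le_rpow (sum_nonneg fun Q _ => Set.indicator_nonneg (fun _ _ => hterm Q) x)
    ?_ (by positivity)
  calc ∑ Q ∈ S, Q.set.indicator (fun _ => (avg μ Q.set fun y => |g y|) ^ r) x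
      ≤ ∑ Q ∈ S, (avg μ Q.set fun y => |g y|) ^ r :=
        sum_le_sum fun Q _ => Set.indicator_le_self' (fun _ _ => hterm Q) x
    _ ≤ ∑ Q ∈ D, (avg μ Q.set fun y => |g y|) ^ r :=
        sum_le_sum_of_subset_of_nonneg hSD fun Q _ _ => hterm Q

end Operators

lemma rpow_inner_le_weight_mul_Lp_of_nonneg {ι : Type*} (s : Finset ι) {p : ℝ} (hp : 1 ≤ p)
    {w a : ι → ℝ} (hw : ∀ i, 0 ≤ w i) (ha : ∀ i, 0 ≤ a i) :
    (∑ i ∈ s, w i * a i) ^ p ≤ (∑ i ∈ s, w i) ^ (p - 1) * ∑ i ∈ s, w i * a i ^ p := by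
  have hp0 : p ≠ 0 := by positivity
  have hW : 0 ≤ ∑ i ∈ s, w i := sum_nonneg fun i _ => hw i
  have hB : 0 ≤ ∑ i ∈ s, w i * a i ^ p :=
    sum_nonneg fun i _ => mul_nonneg (hw i) (Real.rpow_nonneg (ha i) p)
  calc (∑ i ∈ s, w i * a i) ^ p
      ≤ ((∑ i ∈ s, w i) ^ (1 - p⁻¹) * (∑ i ∈ s, w i * a i ^ p) ^ p⁻¹) ^ p :=
        Real.rpow_le_rpow (sum_nonneg fun i _ => mul_nonneg (hw i) (ha i))
          (Real.inner_le_weight_mul_Lp_of_nonneg s hp w a hw ha) (by positivity)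
    _ = (∑ i ∈ s, w i) ^ (p - 1) * ∑ i ∈ s, w i * a i ^ p := by
        rw [Real.mul_rpow (by positivity) (by positivity), ← Real.rpow_mul hW,
          ← Real.rpow_mul hB, inv_mul_cancel₀ hp0, Real.rpow_one, sub_mul, one_mul,
          inv_mul_cancel₀ hp0]

lemma sum_rpow_sum_mul_le {ι κ : Type*} (s : Finset ι) (t : Finset κ) {p R K : ℝ} (hp : 1 ≤ p)
    (hR0 : 0 ≤ R) {w : ι → κ → ℝ} {a : ι → ℝ} (hw : ∀ i j, 0 ≤ w i j) (ha : ∀ i, 0 ≤ a i)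
    (hR : ∀ j ∈ t, ∑ i ∈ s, w i j ≤ R) (hK : ∀ i ∈ s, ∑ j ∈ t, w i j ≤ K) :
    ∑ j ∈ t, (∑ i ∈ s, w i j * a i) ^ p ≤ R ^ (p - 1) * K * ∑ i ∈ s, a i ^ p := by
  have hap : ∀ i, 0 ≤ a i ^ p := fun i => Real.rpow_nonneg (ha i) p
  calc ∑ j ∈ t, (∑ i ∈ s, w i j * a i) ^ p
      ≤ ∑ j ∈ t, R ^ (p - 1) * ∑ i ∈ s, w i j * a i ^ p := by
        refine sum_le_sum fun j hj =>
          (rpow_inner_le_weight_mul_Lp_of_nonneg s hp (hw · j) ha).trans ?_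
        exact mul_le_mul_of_nonneg_right
          (Real.rpow_le_rpow (sum_nonneg fun i _ => hw i j) (hR j hj) (by linarith))
          (sum_nonneg fun i _ => mul_nonneg (hw i j) (hap i))
    _ = R ^ (p - 1) * ∑ i ∈ s, (∑ j ∈ t, w i j) * a i ^ p := by
        rw [← mul_sum, sum_comm]
        simp_rw [sum_mul]
    _ ≤ R ^ (p - 1) * ∑ i ∈ s, K * a i ^ p := by
        gcongr with i hi
        · exact hap i
        · exact hK i hi
    _ = R ^ (p - 1) * K * ∑ i ∈ s, a i ^ p := by simp_rw [mul_sum, mul_assoc]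

lemma sum_one_half_pow_le_two {ι : Type*} (s : Finset ι) {φ : ι → ℕ} (hφ : Set.InjOn φ s) :
    ∑ i ∈ s, ((1 : ℝ) / 2) ^ φ i ≤ 2 := by
  rw [← sum_image hφ]
  exact (summable_geometric_two.sum_le_tsum _ fun _ _ => by positivity).trans_eq
    tsum_geometric_two

noncomputable def geomWeight (i j : ℕ) : ℝ := if i ≤ j then ((1 : ℝ) / 2) ^ (j - i) else 0

lemma geomWeight_nonneg (i j : ℕ) : 0 ≤ geomWeight i j := by
  unfold geomWeight; split_ifs <;> positivity

lemma sum_geomWeight_left_le {ι : Type*} (s : Finset ι) {φ : ι → ℕ} (hφ : Set.InjOn φ s)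
    (j : ℕ) : ∑ i ∈ s, geomWeight (φ i) j ≤ 2 := by
  unfold geomWeight
  rw [← sum_filter]
  refine sum_one_half_pow_le_two _ fun i hi i' hi' h =>
    hφ (mem_filter.1 hi).1 (mem_filter.1 hi').1 ?_
  have := (mem_filter.1 hi).2; have := (mem_filter.1 hi').2
  omega

lemma sum_geomWeight_right_le {ι : Type*} (s : Finset ι) {φ : ι → ℕ} (hφ : Set.InjOn φ s)
    (i : ℕ) : ∑ j ∈ s, geomWeight i (φ j) ≤ 2 := by
  unfold geomWeight
  rw [← sum_filter]
  refine sum_one_half_pow_le_two _ fun j hj j' hj' h =>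
    hφ (mem_filter.1 hj).1 (mem_filter.1 hj').1 ?_
  have := (mem_filter.1 hj).2; have := (mem_filter.1 hj').2
  omega

section DoublingChain

variable {X : Type*}

def annulus (T : ℕ → Set X) (i : ℕ) : Set X := T (i + 1) \ T i

lemma annulus_subset (T : ℕ → Set X) (i : ℕ) : annulus T i ⊆ T (i + 1) := sdiff_subset

lemma Monotone.pairwise_disjoint_annulus {T : ℕ → Set X} (hT : Monotone T) :
    Pairwise fun i j => Disjoint (annulus T i) (annulus T j) := by
  have h : annulus T = fun i => disjointed T (i + 1) :=
    funext fun i => (hT.disjointed_add_one i).symm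
  rw [h]
  exact (disjoint_disjointed T).comp_of_injective (add_left_injective 1)

variable [MeasurableSpace X]

structure IsDoublingChain (μ : Measure X) (T : ℕ → Set X) : Prop where
  mono : Monotone T
  measurableSet : ∀ m, MeasurableSet (T m)
  measure_ne_top : ∀ m, μ (T m) ≠ ∞
  measure_zero_pos : 0 < μ (T 0)
  two_mul_measure_le : ∀ m, 2 * μ (T m) ≤ μ (T (m + 1))

namespace IsDoublingChain

variable {μ : Measure X} {T : ℕ → Set X}

lemma measureReal_pos (hT : IsDoublingChain μ T) (m : ℕ) : 0 < μ.real (T m) :=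
  ENNReal.toReal_pos
    (hT.measure_zero_pos.trans_le (measure_mono (hT.mono m.zero_le))).ne' (hT.measure_ne_top m)

lemma two_mul_measureReal_le (hT : IsDoublingChain μ T) (m : ℕ) :
    2 * μ.real (T m) ≤ μ.real (T (m + 1)) := by
  have := (ENNReal.toReal_le_toReal (mul_ne_top ofNat_ne_top (hT.measure_ne_top m))
    (hT.measure_ne_top (m + 1))).2 (hT.two_mul_measure_le m)
  rwa [toReal_mul, toReal_ofNat] at this

lemma two_pow_mul_measureReal_le (hT : IsDoublingChain μ T) {i j : ℕ} (hij : i ≤ j) :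
    2 ^ (j - i) * μ.real (T i) ≤ μ.real (T j) := by
  induction j, hij using Nat.le_induction with
  | base => simp
  | succ j hij ih =>
    rw [Nat.sub_add_comm hij, pow_succ', mul_assoc]
    exact (mul_le_mul_of_nonneg_left ih zero_le_two).trans (hT.two_mul_measureReal_le j)

lemma measureReal_le_two_mul_measureReal_annulus (hT : IsDoublingChain μ T) (j : ℕ) :
    μ.real (T (j + 1)) ≤ 2 * μ.real (annulus T j) := by
  rw [annulus, measureReal_sdiff (hT.mono j.le_succ) (hT.measurableSet j) (hT.measure_ne_top _)]
  linarith [hT.two_mul_measureReal_le j]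

lemma half_le_measureReal_annulus_inter_div (hT : IsDoublingChain μ T) (j : ℕ) :
    1 / 2 ≤ μ.real (annulus T j ∩ T (j + 1)) / μ.real (T (j + 1)) := by
  rw [inter_eq_left.2 (annulus_subset T j), le_div_iff₀ (hT.measureReal_pos _)]
  linarith [hT.measureReal_le_two_mul_measureReal_annulus j]

lemma measureReal_annulus_inter_div_le (hT : IsDoublingChain μ T) (i j : ℕ) :
    μ.real (annulus T i ∩ T (j + 1)) / μ.real (T (j + 1)) ≤ geomWeight i j := by
  unfold geomWeight
  split_ifs with hij
  · have hsub : μ.real (annulus T i ∩ T (j + 1)) ≤ μ.real (T (i + 1)) :=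
      measureReal_mono (inter_subset_left.trans (annulus_subset T i)) (hT.measure_ne_top _)
    have hgrowth := hT.two_pow_mul_measureReal_le (Nat.add_le_add_right hij 1)
    rw [Nat.add_sub_add_right] at hgrowth
    rw [div_le_iff₀ (hT.measureReal_pos _), one_div_pow, div_mul_eq_mul_div, one_mul,
      le_div_iff₀ (by positivity)]
    calc μ.real (annulus T i ∩ T (j + 1)) * 2 ^ (j - i) ≤ μ.real (T (i + 1)) * 2 ^ (j - i) := by
          gcongr
      _ ≤ μ.real (T (j + 1)) := by linarith
  · have hdisj : Disjoint (annulus T i) (T (j + 1)) :=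
      disjoint_sdiff_left.mono_right (hT.mono (by omega))
    rw [hdisj.inter_eq, measureReal_empty, zero_div]

end IsDoublingChain

end DoublingChain

section AnnulusStep

variable {X E F : Type*} [NormedAddCommGroup E] [NormedAddCommGroup F] {n : ℕ}

noncomputable def annulusStep (T : ℕ → Set X) (e : Fin n → E) (y : X) : E :=
  ∑ j : Fin n, (annulus T j).indicator (fun _ => e j) y

lemma annulusStep_comp {T : ℕ → Set X} (hT : Monotone T) {φ : E → F} (hφ : φ 0 = 0)
    (e : Fin n → E) (y : X) : φ (annulusStep T e y) = annulusStep T (fun i => φ (e i)) y := by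
  unfold annulusStep
  by_cases hy : ∃ i : Fin n, y ∈ annulus T i
  · obtain ⟨i, hi⟩ := hy
    have hother : ∀ j ≠ i, y ∉ annulus T j := fun j hji =>
      disjoint_right.1 (hT.pairwise_disjoint_annulus (Fin.val_injective.ne hji)) hi
    rw [sum_eq_single i (fun j _ hji => indicator_of_notMem (hother j hji) _) (by simp),
      sum_eq_single i (fun j _ hji => indicator_of_notMem (hother j hji) _) (by simp),
      indicator_of_mem hi, indicator_of_mem hi]
  · simp only [not_exists] at hy
    simp [indicator_of_notMem (hy _), hφ]

variable [MeasurableSpace X] {μ : Measure X} {T : ℕ → Set X}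

lemma IsDoublingChain.measurableSet_annulus (hT : IsDoublingChain μ T) (i : ℕ) :
    MeasurableSet (annulus T i) :=
  (hT.measurableSet _).diff (hT.measurableSet _)

lemma IsDoublingChain.integrable_indicator_annulus (hT : IsDoublingChain μ T) (i : ℕ) (c : E) :
    Integrable ((annulus T i).indicator fun _ => c) μ :=
  (integrableOn_const (measure_ne_top_of_subset (annulus_subset T i) (hT.measure_ne_top _))
    ).integrable_indicator (hT.measurableSet_annulus i)

lemma IsDoublingChain.integrable_annulusStep (hT : IsDoublingChain μ T) (e : Fin n → E) :
    Integrable (annulusStep T e) μ :=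
  integrable_finsetSum _ fun j _ => hT.integrable_indicator_annulus j (e j)

end AnnulusStep

section Averages

variable {d n : ℕ} {μ : Measure (Fin d → ℝ)} {T : ℕ → Set (Fin d → ℝ)}

lemma IsDoublingChain.avg_annulusStep {E : Type*} [NormedAddCommGroup E] [NormedSpace ℝ E]
    [CompleteSpace E] (hT : IsDoublingChain μ T) (e : Fin n → E) (S : Set (Fin d → ℝ)) :
    avg μ S (annulusStep T e) = ∑ i : Fin n, (μ.real (annulus T i ∩ S) / μ.real S) • e i := by
  unfold avg annulusStep
  rw [integral_finsetSum _ fun (i : Fin n) _ =>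
    (hT.integrable_indicator_annulus i (e i)).integrableOn, smul_sum]
  refine sum_congr rfl fun i _ => ?_
  rw [setIntegral_indicator (hT.measurableSet_annulus i), setIntegral_const, smul_smul,
    inter_comm, div_eq_inv_mul]
  rfl

lemma IsDoublingChain.avg_comp_annulusStep {E F : Type*} [NormedAddCommGroup E]
    [NormedAddCommGroup F] [NormedSpace ℝ F] [CompleteSpace F] (hT : IsDoublingChain μ T)
    {φ : E → F} (hφ : φ 0 = 0) (e : Fin n → E) (S : Set (Fin d → ℝ)) :
    avg μ S (fun y => φ (annulusStep T e y)) =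
      ∑ i : Fin n, (μ.real (annulus T i ∩ S) / μ.real S) • φ (e i) := by
  simp_rw [annulusStep_comp hT.mono hφ]
  exact hT.avg_annulusStep _ S

lemma IsDoublingChain.half_smul_abs_le_avg_abs_annulusStep {E : Type*} [NormedAddCommGroup E]
    [Lattice E] [HasSolidNorm E] [IsOrderedAddMonoid E] [NormedSpace ℝ E] [CompleteSpace E]
    (hT : IsDoublingChain μ T) (e : Fin n → E) (j : Fin n) :
    (1 / 2 : ℝ) • |e j| ≤ avg μ (T (j + 1)) fun y => |annulusStep T e y| := by
  rw [hT.avg_comp_annulusStep abs_zero]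
  calc (1 / 2 : ℝ) • |e j|
      ≤ (μ.real (annulus T j ∩ T (j + 1)) / μ.real (T (j + 1))) • |e j| :=
        smul_le_smul_of_nonneg_right (hT.half_le_measureReal_annulus_inter_div j) (abs_nonneg _)
    _ ≤ ∑ i : Fin n, (μ.real (annulus T i ∩ T (j + 1)) / μ.real (T (j + 1))) • |e i| :=
        single_le_sum (f := fun i : Fin n =>
          (μ.real (annulus T i ∩ T (j + 1)) / μ.real (T (j + 1))) • |e i|) (fun i _ =>
          smul_nonneg (div_nonneg measureReal_nonneg measureReal_nonneg) (abs_nonneg _))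
          (mem_univ j)

lemma IsDoublingChain.avg_abs_norm_annulusStep_le {E : Type*} [NormedAddCommGroup E]
    (hT : IsDoublingChain μ T) (e : Fin n → E) (j : Fin n) :
    (avg μ (T (j + 1)) fun y => |‖annulusStep T e y‖|) ≤ ∑ i : Fin n, geomWeight i j * ‖e i‖ := by
  rw [hT.avg_comp_annulusStep (φ := fun v => |‖v‖|) (by simp)]
  exact sum_le_sum fun i _ => by
    rw [abs_norm, smul_eq_mul]
    exact mul_le_mul_of_nonneg_right (hT.measureReal_annulus_inter_div_le i j) (norm_nonneg _)

end Averages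

lemma exists_monotone_doubling_subseq {u : ℕ → ℝ≥0∞} (hu : Monotone u) (hfin : ∀ n, u n ≠ ∞)
    (htop : ⨆ n, u n = ∞) :
    ∃ φ : ℕ → ℕ, Monotone φ ∧ 0 < u (φ 0) ∧ ∀ m, 2 * u (φ m) ≤ u (φ (m + 1)) := by
  have hlt : ∀ M ≠ ∞, ∃ n, M < u n := fun M hM => lt_iSup_iff.1 (htop ▸ hM.lt_top)
  choose g hg using fun p => hlt (2 * u p) (mul_ne_top ofNat_ne_top (hfin p))
  obtain ⟨n₀, hn₀⟩ := hlt 0 zero_ne_top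
  have hstep : ∀ m, g^[m + 1] n₀ = g (g^[m] n₀) := fun m => Function.iterate_succ_apply' g m n₀
  refine ⟨fun m => g^[m] n₀, monotone_nat_of_le_succ fun m => ?_, hn₀, fun m => ?_⟩
  · show g^[m] n₀ ≤ g^[m + 1] n₀
    rw [hstep]
    by_contra! h
    exact (hg _).not_ge ((hu h.le).trans (le_mul_of_one_le_left' one_le_two))
  · show 2 * u (g^[m] n₀) ≤ u (g^[m + 1] n₀)
    rw [hstep]
    exact (hg _).le

section DyadicCubes

variable {d : ℕ}

lemma DyadicCube.measurableSet_set (Q : DyadicCube d) : MeasurableSet Q.set := by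
  have : Q.set = univ.pi fun i => Ico ((2 : ℝ) ^ Q.k * Q.m i) ((2 : ℝ) ^ Q.k * (Q.m i + 1)) := by
    ext x; simp [DyadicCube.set, Set.mem_pi]
  rw [this]
  exact .univ_pi fun _ => measurableSet_Ico

lemma DyadicCube.measure_set_ne_top (μ : Measure (Fin d → ℝ)) [IsLocallyFiniteMeasure μ]
    (Q : DyadicCube d) : μ Q.set ≠ ∞ := by
  have hsub : Q.set ⊆ Icc (fun i => (2 : ℝ) ^ Q.k * Q.m i) (fun i => (2 : ℝ) ^ Q.k * (Q.m i + 1)) :=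
    fun _ hx => ⟨fun i => (hx i).1, fun i => (hx i).2.le⟩
  exact measure_ne_top_of_subset hsub isCompact_Icc.measure_lt_top.ne

/-- The dyadic cube of side `2 ^ n` at the origin lying, in coordinate `i`, on the positive
side if `σ i` and on the negative side otherwise. -/
def orthantCube (σ : Fin d → Bool) (n : ℕ) : DyadicCube d :=
  ⟨n, fun i => if σ i then 0 else -1⟩

lemma orthantCube_set_mono (σ : Fin d → Bool) : Monotone fun n => (orthantCube σ n).set := by
  intro n n' hn x hx i
  have hpow : (2 : ℝ) ^ n ≤ 2 ^ n' := pow_le_pow_right₀ one_le_two hn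
  have hxi := hx i
  simp only [orthantCube, zpow_natCast] at hxi ⊢
  cases h : σ i <;> simp only [h, Bool.false_eq_true, if_true, if_false] at hxi ⊢ <;>
    push_cast at hxi ⊢ <;> constructor <;> linarith

lemma exists_mem_orthantCube (x : Fin d → ℝ) : ∃ σ n, x ∈ (orthantCube σ n).set := by
  obtain ⟨n, hn⟩ := pow_unbounded_of_one_lt (∑ i, |x i|) one_lt_two
  refine ⟨fun i => decide (0 ≤ x i), n, fun i => ?_⟩
  have hxi : |x i| < 2 ^ n := (single_le_sum (fun j _ => abs_nonneg (x j)) (mem_univ i)).trans_lt hn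
  obtain ⟨hlo, hhi⟩ := abs_lt.1 hxi
  simp only [orthantCube, zpow_natCast]
  by_cases h : 0 ≤ x i
  · simpa [h] using hhi
  · simpa [h] using ⟨hlo.le, not_le.1 h⟩

lemma exists_iSup_measure_orthantCube_eq_top (μ : Measure (Fin d → ℝ)) (hμ : μ univ = ∞) :
    ∃ σ : Fin d → Bool, ⨆ n, μ (orthantCube σ n).set = ∞ := by
  by_contra! h
  have hcover : univ = ⋃ σ : Fin d → Bool, ⋃ n, (orthantCube σ n).set :=
    (Set.eq_univ_of_forall fun x => by simpa using exists_mem_orthantCube x).symm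
  have : μ univ < ∞ := calc
    μ univ ≤ ∑ σ : Fin d → Bool, μ (⋃ n, (orthantCube σ n).set) :=
      hcover ▸ measure_iUnion_fintype_le μ _
    _ = ∑ σ : Fin d → Bool, ⨆ n, μ (orthantCube σ n).set := by
      simp_rw [(orthantCube_set_mono _).measure_iUnion]
    _ < ∞ := ENNReal.sum_lt_top.2 fun σ _ => (h σ).lt_top
  exact this.ne hμ

lemma exists_isDoublingChain_dyadicCube (μ : Measure (Fin d → ℝ)) [IsLocallyFiniteMeasure μ]
    (hμ : μ univ = ∞) : ∃ Q : ℕ → DyadicCube d, IsDoublingChain μ fun m => (Q m).set := by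
  obtain ⟨σ, hσ⟩ := exists_iSup_measure_orthantCube_eq_top μ hμ
  obtain ⟨φ, hφ, h0, h2⟩ := exists_monotone_doubling_subseq
    (fun _ _ h => measure_mono (orthantCube_set_mono σ h))
    (fun n => (orthantCube σ n).measure_set_ne_top μ) hσ
  exact ⟨fun m => orthantCube σ (φ m), (orthantCube_set_mono σ).comp hφ,
    fun m => (orthantCube σ (φ m)).measurableSet_set,
    fun m => (orthantCube σ (φ m)).measure_set_ne_top μ, h0, h2⟩

end DyadicCubes

section ChainOfCubes

variable {d n : ℕ} {μ : Measure (Fin d → ℝ)} {Q : ℕ → DyadicCube d}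

def chainCubes (Q : ℕ → DyadicCube d) (n : ℕ) : Finset (DyadicCube d) :=
  univ.image fun j : Fin n => Q (j + 1)

lemma IsDoublingChain.norm_sum_le_two_mul_norm_dyadicMaximal {E : Type*} [NormedAddCommGroup E]
    [Lattice E] [HasSolidNorm E] [IsOrderedAddMonoid E] [NormedSpace ℝ E] [CompleteSpace E]
    (hQ : IsDoublingChain μ fun m => (Q m).set) {e : Fin n → E}
    (he : Pairwise fun j k => |e j| ⊓ |e k| = 0) {x : Fin d → ℝ} (hx : x ∈ (Q 0).set) :
    ‖∑ k, e k‖ ≤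
      2 * ‖dyadicMaximal μ (chainCubes Q n) (annulusStep (fun m => (Q m).set) e) x‖ := by
  set M := dyadicMaximal μ (chainCubes Q n) (annulusStep (fun m => (Q m).set) e) x
  have hM := dyadicMaximal_le_iff.1 (le_refl M)
  have hM0 : 0 ≤ (2 : ℝ) • M := smul_nonneg zero_le_two hM.1
  have hle : ∀ j, |e j| ≤ (2 : ℝ) • M := fun j => by
    have hj := hM.2 (Q (j + 1)) (mem_image_of_mem _ (mem_univ j))
    rw [indicator_of_mem (hQ.mono (Nat.zero_le _) hx)] at hj
    calc |e j| = (2 : ℝ) • ((1 / 2 : ℝ) • |e j|) := by rw [smul_smul]; norm_num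
      _ ≤ (2 : ℝ) • M := smul_le_smul_of_nonneg_left
          ((hQ.half_smul_abs_le_avg_abs_annulusStep e j).trans hj) zero_le_two
  have habs : |∑ k, e k| ≤ |(2 : ℝ) • M| := by
    rw [abs_of_nonneg hM0]
    exact (le_sum_of_subadditive _ abs_zero.le abs_add_le _ _).trans
      (sum_le_of_pairwise_inf_eq_zero (fun _ _ => abs_nonneg _) (he.set_pairwise _) hM0
        fun j _ => hle j)
  simpa [norm_smul] using norm_le_norm_of_abs_le_abs habs

lemma IsDoublingChain.sparseOp_annulusStep_le {E : Type*} [NormedAddCommGroup E]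
    (hQ : IsDoublingChain μ fun m => (Q m).set) {r : ℝ} (hr : 1 ≤ r)
    {S : Finset (DyadicCube d)} (hS : S ⊆ chainCubes Q n) (e : Fin n → E) (x : Fin d → ℝ) :
    sparseOp μ r S (fun y => ‖annulusStep (fun m => (Q m).set) e y‖) x ≤
      2 * (∑ k, ‖e k‖ ^ r) ^ (1 / r) := by
  set f := annulusStep (fun m => (Q m).set) e
  have hr0 : 0 < r := by linarith
  calc sparseOp μ r S (fun y => ‖f y‖) x
      ≤ (∑ R ∈ chainCubes Q n, (avg μ R.set fun y => |‖f y‖|) ^ r) ^ (1 / r) :=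
        sparseOp_le_of_subset hr0.le hS _ x
    _ ≤ (∑ j : Fin n, (avg μ (Q (j + 1)).set fun y => |‖f y‖|) ^ r) ^ (1 / r) := by
        gcongr
        · exact sum_nonneg fun R _ => Real.rpow_nonneg (avg_abs_nonneg _ _) r
        · exact sum_image_le_of_nonneg fun R _ => Real.rpow_nonneg (avg_abs_nonneg _ _) r
    _ ≤ (∑ j : Fin n, (∑ i : Fin n, geomWeight i j * ‖e i‖) ^ r) ^ (1 / r) := by
        gcongr with j
        · exact sum_nonneg fun j _ => Real.rpow_nonneg (avg_abs_nonneg _ _) r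
        · exact avg_abs_nonneg _ _
        · exact hQ.avg_abs_norm_annulusStep_le e j
    _ ≤ (2 ^ (r - 1) * 2 * ∑ i : Fin n, ‖e i‖ ^ r) ^ (1 / r) := by
        gcongr
        · exact sum_nonneg fun j _ => Real.rpow_nonneg
            (sum_nonneg fun i _ => mul_nonneg (geomWeight_nonneg _ _) (norm_nonneg _)) r
        · exact sum_rpow_sum_mul_le _ _ hr zero_le_two (fun _ _ => geomWeight_nonneg _ _)
            (fun _ => norm_nonneg _)
            (fun j _ => sum_geomWeight_left_le _ Fin.val_injective.injOn j)
            (fun i _ => sum_geomWeight_right_le _ Fin.val_injective.injOn i)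
    _ = 2 * (∑ k, ‖e k‖ ^ r) ^ (1 / r) := by
        rw [← Real.rpow_add_one two_ne_zero, sub_add_cancel,
          Real.mul_rpow (by positivity) (sum_nonneg fun _ _ => by positivity),
          one_div, Real.rpow_rpow_inv zero_le_two hr0.ne']

end ChainOfCubes

theorem sparse_domination_implies_upper_r_estimate_general
    {d : ℕ}
    (E : Type*) [NormedAddCommGroup E] [Lattice E] [HasSolidNorm E] [IsOrderedAddMonoid E] [NormedSpace ℝ E] [CompleteSpace E]
    (μ : Measure (Fin d → ℝ)) [IsLocallyFiniteMeasure μ]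
    (hμ : μ Set.univ = ∞)
    (r : ℝ) (hr : 1 < r) (C : ℝ)
    (hdom : ∀ D : Finset (DyadicCube d), ∀ f : (Fin d → ℝ) → E,
      LocallyIntegrable f μ →
      ∃ S ⊆ D, IsSparse μ S ∧
        ∀ᵐ x ∂μ, ‖dyadicMaximal μ D f x‖ ≤ C * sparseOp μ r S (fun y => ‖f y‖) x) :
    ∃ C' : ℝ, ∀ (n : ℕ) (e : Fin n → E),
      (∀ j k, j ≠ k → |e j| ⊓ |e k| = 0) →
      ‖∑ k, e k‖ ≤ C' * (∑ k, ‖e k‖ ^ r) ^ (1 / r) := by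
  obtain ⟨Q, hQ⟩ := exists_isDoublingChain_dyadicCube μ hμ
  refine ⟨4 * max C 0, fun n e he => ?_⟩
  set f := annulusStep (fun m => (Q m).set) e
  obtain ⟨S, hS, -, hae⟩ := hdom (chainCubes Q n) f (hQ.integrable_annulusStep e).locallyIntegrable
  obtain ⟨x, hx₀, hx⟩ :=
    Measure.exists_mem_of_measure_ne_zero_of_ae hQ.measure_zero_pos.ne' (ae_restrict_of_ae hae)
  calc ‖∑ k, e k‖ ≤ 2 * ‖dyadicMaximal μ (chainCubes Q n) f x‖ :=
        hQ.norm_sum_le_two_mul_norm_dyadicMaximal (fun j k => he j k) hx₀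
    _ ≤ 2 * (max C 0 * sparseOp μ r S (fun y => ‖f y‖) x) := by
        gcongr
        exact hx.trans (mul_le_mul_of_nonneg_right (le_max_left _ _) (sparseOp_nonneg _ _ _ _))
    _ ≤ 2 * (max C 0 * (2 * (∑ k, ‖e k‖ ^ r) ^ (1 / r))) := by
        gcongr
        exact hQ.sparseOp_annulusStep_le hr.le hS e x
    _ = 4 * max C 0 * (∑ k, ‖e k‖ ^ r) ^ (1 / r) := by ring

/-- from the proof of Theorem 1.2.
Sparse domination of the dyadic lattice maximal operator with exponent `r` (for a locally
finite Borel measure with `μ(ℝ^d) = ∞`) implies an upper `r`-estimate for `E`: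
`‖∑ e k‖ ≤ C' (∑ ‖e k‖^r)^{1/r}` for pairwise disjoint `e₁, …, e_n`. -/
theorem sparse_domination_implies_upper_r_estimate
    {d : ℕ} (hd : 1 ≤ d)
    (E : Type*) [NormedAddCommGroup E] [Lattice E] [HasSolidNorm E] [IsOrderedAddMonoid E] [NormedSpace ℝ E] [CompleteSpace E]
    (μ : Measure (Fin d → ℝ)) [IsLocallyFiniteMeasure μ]
    (hμ : μ Set.univ = ∞)
    (r : ℝ) (hr : 1 < r) (C : ℝ)
    (hdom : ∀ D : Finset (DyadicCube d), ∀ f : (Fin d → ℝ) → E,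
      LocallyIntegrable f μ →
      ∃ S ⊆ D, IsSparse μ S ∧
        ∀ᵐ x ∂μ, ‖dyadicMaximal μ D f x‖ ≤ C * sparseOp μ r S (fun y => ‖f y‖) x) :
    ∃ C' : ℝ, ∀ (n : ℕ) (e : Fin n → E),
      (∀ j k, j ≠ k → |e j| ⊓ |e k| = 0) →
      ‖∑ k, e k‖ ≤ C' * (∑ k, ‖e k‖ ^ r) ^ (1 / r) :=
  sparse_domination_implies_upper_r_estimate_general E μ hμ r hr C hdom
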